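/- Let Ω ∈ (0,1), T > 0, M₀ > 0, δ > 0 with T = -ln(Ω/(1+M₀))/δ, and let c > 0. Suppose N : [t_0, ∞) → ℝ≥0 and μ_i = Ω^{i-1} μ(t_0) with μ(t_0) > 0 satisfy: for each i ≥ 1 and t ∈ [t_0+(i-1)T, t_0+iT), N(t) ≤ max{M₀ e^{-δ(t - (t_0+(i-1)T))} N(t_0+(i-1)T), Ω c μ_i} and N(t_0+(i-1)T) ≤ c μ_i. Then for all t ≥ t_0, N(t) ≤ (1+M₀) c μ(t_0) e^{(ln Ω / T)(t - t_0)} / Ω. -/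

import Mathlib

open Real Set

/-
On the `k`-th sampling window `[t₀ + kT, t₀ + (k+1)T)` the decay estimate and the bound at the
window's start give `N t ≤ (1 + M₀) c Ω^k μ(t₀)`, because `e^{-δ s} ≤ 1` and `Ω ≤ 1`. Since
`t - t₀ < (k+1)T` and `log Ω < 0`, the zoom factor `Ω^(k+1)` is at most `e^{(log Ω / T)(t - t₀)}`,
and dividing by `Ω` gives the exponential envelope.
-/

lemma exists_nat_mul_le_lt_add_one_mul {T t₀ t : ℝ} (hT : 0 < T) (ht : t₀ ≤ t) :
    ∃ k : ℕ, t₀ + k * T ≤ t ∧ t < t₀ + (k + 1) * T := by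
  have hx : 0 ≤ (t - t₀) / T := div_nonneg (by linarith) hT.le
  refine ⟨⌊(t - t₀) / T⌋₊, ?_, ?_⟩
  · have := (le_div_iff₀ hT).1 (Nat.floor_le hx)
    linarith
  · have := (div_lt_iff₀ hT).1 (Nat.lt_floor_add_one ((t - t₀) / T))
    linarith

lemma pow_le_exp_log_div_mul {Ω T x : ℝ} (hΩ₀ : 0 < Ω) (hΩ₁ : Ω ≤ 1) (hT : 0 < T) {n : ℕ}
    (hx : x ≤ n * T) : Ω ^ n ≤ exp (log Ω / T * x) := by
  have hrate : log Ω / T ≤ 0 := div_nonpos_of_nonpos_of_nonneg (log_nonpos hΩ₀.le hΩ₁) hT.le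
  calc Ω ^ n = exp (log Ω / T * (n * T)) := by
        rw [← exp_log (pow_pos hΩ₀ n), log_pow]
        field_simp
    _ ≤ exp (log Ω / T * x) := exp_le_exp.2 (mul_le_mul_of_nonpos_left hx hrate)

lemma max_decay_le_one_add_mul {M₀ δ s Ω x a : ℝ} (hM₀ : 0 ≤ M₀) (hδ : 0 ≤ δ) (hs : 0 ≤ s)
    (hΩ : Ω ≤ 1) (ha : 0 ≤ a) (hx : x ≤ a) :
    max (M₀ * exp (-δ * s) * x) (Ω * a) ≤ (1 + M₀) * a := by
  have hexp : exp (-δ * s) ≤ 1 := exp_le_one_iff.2 (by nlinarith)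
  refine max_le ?_ (by nlinarith)
  calc M₀ * exp (-δ * s) * x ≤ M₀ * exp (-δ * s) * a := by gcongr
    _ ≤ M₀ * 1 * a := by gcongr
    _ ≤ (1 + M₀) * a := by nlinarith

theorem stmt_13_general (Ω T M₀ δ c t₀ μt₀ : ℝ)
    (hΩ : Ω ∈ Set.Ioo (0 : ℝ) 1) (hT : 0 < T) (hM₀ : 0 < M₀) (hδ : 0 < δ)
    (hc : 0 < c) (hμ : 0 < μt₀)
    (N : ℝ → ℝ)
    (hdecay : ∀ i : ℕ, 1 ≤ i → ∀ t, t₀ + ((i : ℝ) - 1) * T ≤ t → t < t₀ + (i : ℝ) * T →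
      N t ≤ max (M₀ * Real.exp (-δ * (t - (t₀ + ((i : ℝ) - 1) * T))) *
          N (t₀ + ((i : ℝ) - 1) * T)) (Ω * c * (Ω ^ (i - 1) * μt₀)))
    (hstart : ∀ i : ℕ, 1 ≤ i → N (t₀ + ((i : ℝ) - 1) * T) ≤ c * (Ω ^ (i - 1) * μt₀)) :
    ∀ t, t₀ ≤ t →
      N t ≤ (1 + M₀) * c * μt₀ * Real.exp ((Real.log Ω / T) * (t - t₀)) / Ω := by
  obtain ⟨hΩ₀, hΩ₁⟩ := hΩ
  intro t ht
  obtain ⟨k, hkt, htk⟩ := exists_nat_mul_le_lt_add_one_mul hT ht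
  have hcast : ((k + 1 : ℕ) : ℝ) - 1 = k := by push_cast; ring
  have hwindow : N t ≤ (1 + M₀) * (c * (Ω ^ k * μt₀)) := by
    have hd := hdecay (k + 1) (by omega) t (by rwa [hcast]) (by push_cast; linarith)
    have hs := hstart (k + 1) (by omega)
    rw [hcast, Nat.add_sub_cancel] at hd hs
    rw [mul_assoc Ω] at hd
    exact hd.trans <|
      max_decay_le_one_add_mul hM₀.le hδ.le (sub_nonneg.2 hkt) hΩ₁.le (by positivity) hs
  have hzoom : Ω ^ (k + 1) ≤ exp (log Ω / T * (t - t₀)) :=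
    pow_le_exp_log_div_mul hΩ₀ hΩ₁.le hT (by push_cast; linarith)
  calc N t ≤ (1 + M₀) * (c * (Ω ^ k * μt₀)) := hwindow
    _ = (1 + M₀) * c * μt₀ * Ω ^ (k + 1) / Ω := by field_simp; ring
    _ ≤ (1 + M₀) * c * μt₀ * exp (log Ω / T * (t - t₀)) / Ω := by gcongr

/-- Recursive zooming-in argument: per-interval decay plus end-of-interval
contraction yields global exponential convergence at rate `ln Ω / T`. -/
theorem stmt_13 (Ω T M₀ δ c t₀ μt₀ : ℝ)
    (hΩ : Ω ∈ Set.Ioo (0 : ℝ) 1) (hT : 0 < T) (hM₀ : 0 < M₀) (hδ : 0 < δ)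
    (hTdef : T = -Real.log (Ω / (1 + M₀)) / δ) (hc : 0 < c) (hμ : 0 < μt₀)
    (N : ℝ → ℝ) (hNn : ∀ t, 0 ≤ N t)
    (hdecay : ∀ i : ℕ, 1 ≤ i → ∀ t, t₀ + ((i : ℝ) - 1) * T ≤ t → t < t₀ + (i : ℝ) * T →
      N t ≤ max (M₀ * Real.exp (-δ * (t - (t₀ + ((i : ℝ) - 1) * T))) *
          N (t₀ + ((i : ℝ) - 1) * T)) (Ω * c * (Ω ^ (i - 1) * μt₀)))
    (hstart : ∀ i : ℕ, 1 ≤ i → N (t₀ + ((i : ℝ) - 1) * T) ≤ c * (Ω ^ (i - 1) * μt₀)) :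
    ∀ t, t₀ ≤ t →
      N t ≤ (1 + M₀) * c * μt₀ * Real.exp ((Real.log Ω / T) * (t - t₀)) / Ω :=
  stmt_13_general Ω T M₀ δ c t₀ μt₀ hΩ hT hM₀ hδ hc hμ N hdecay hstart
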